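/- arXiv:1405.1476 — 2 statements merged into one kernel-verified Lean document; each statement's English description precedes it below -/
import Mathlib

section
/- Fix n ≥ 1 and suppose i < j ≤ n and i' < j' ≤ n with (i,j) ≠ (i',j'). Let P be the union of segments from (j−1/4, i+1/4) to (j−1/4, j+1/4) to (i+n−1/4, j+1/4) to (i+n−1/4, n+1), and let P' be defined analogously with (i',j'). Then P and P' intersect. -/
/-!
By symmetry let `j ≤ j'`. If `i' < j`, the first (vertical) leg of `P(w_{i'j'})` crosses the
horizontal leg of `P(w_{ij})` at `(j' - 1/4, j + 1/4)`; if `j ≤ i'`, the horizontal leg of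
`P(w_{i'j'})` crosses the last leg of `P(w_{ij})` at `(i + n - 1/4, j' + 1/4)`.
-/

/-- The 2-bend `v`-path `P(v_i)`: from `(i,0)` up to `(i,i)`, right to `(i+n,i)`,
and up to `(i+n,n+1)`. -/
def vPath (n i : ℕ) : Set (ℝ × ℝ) :=
  segment ℝ ((i : ℝ), 0) ((i : ℝ), (i : ℝ)) ∪
    segment ℝ ((i : ℝ), (i : ℝ)) ((i : ℝ) + n, (i : ℝ)) ∪
    segment ℝ ((i : ℝ) + n, (i : ℝ)) ((i : ℝ) + n, (n : ℝ) + 1)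

/-- The 2-bend `w`-path `P(w_{ij})`: from `(j-1/4, i+1/4)` up to `(j-1/4, j+1/4)`,
right to `(i+n-1/4, j+1/4)`, and up to `(i+n-1/4, n+1)`. -/
def wPath (n i j : ℕ) : Set (ℝ × ℝ) :=
  segment ℝ ((j : ℝ) - 1/4, (i : ℝ) + 1/4) ((j : ℝ) - 1/4, (j : ℝ) + 1/4) ∪
    segment ℝ ((j : ℝ) - 1/4, (j : ℝ) + 1/4) ((i : ℝ) + n - 1/4, (j : ℝ) + 1/4) ∪
    segment ℝ ((i : ℝ) + n - 1/4, (j : ℝ) + 1/4) ((i : ℝ) + n - 1/4, (n : ℝ) + 1)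

open Set

lemma Prod.mk_mem_segment_left {x₁ x₂ x : ℝ} (y : ℝ) (hx : x ∈ Icc x₁ x₂) :
    (x, y) ∈ segment ℝ (x₁, y) (x₂, y) := by
  rw [← Prod.image_mk_segment_left]
  exact mem_image_of_mem _ (Icc_subset_segment hx)

lemma Prod.mk_mem_segment_right (x : ℝ) {y₁ y₂ y : ℝ} (hy : y ∈ Icc y₁ y₂) :
    (x, y) ∈ segment ℝ (x, y₁) (x, y₂) := by
  rw [← Prod.image_mk_segment_right]
  exact mem_image_of_mem _ (Icc_subset_segment hy)

section wPath

variable {n i j k : ℕ}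

lemma mk_mem_wPath_firstLeg (hik : i ≤ k) (hkj : k ≤ j) :
    ((j : ℝ) - 1/4, (k : ℝ) + 1/4) ∈ wPath n i j := by
  refine Or.inl (Or.inl (Prod.mk_mem_segment_right _ ⟨?_, ?_⟩))
  · have : (i : ℝ) ≤ k := by exact_mod_cast hik
    linarith
  · have : (k : ℝ) ≤ j := by exact_mod_cast hkj
    linarith

lemma mk_mem_wPath_secondLeg (hjk : j ≤ k) (hk : k ≤ i + n) :
    ((k : ℝ) - 1/4, (j : ℝ) + 1/4) ∈ wPath n i j := by
  refine Or.inl (Or.inr (Prod.mk_mem_segment_left _ ⟨?_, ?_⟩))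
  · have : (j : ℝ) ≤ k := by exact_mod_cast hjk
    linarith
  · have : (k : ℝ) ≤ i + n := by exact_mod_cast hk
    linarith

lemma mk_mem_wPath_lastLeg (hjk : j ≤ k) (hkn : k ≤ n) :
    ((i : ℝ) + n - 1/4, (k : ℝ) + 1/4) ∈ wPath n i j := by
  refine Or.inr (Prod.mk_mem_segment_right _ ⟨?_, ?_⟩)
  · have : (j : ℝ) ≤ k := by exact_mod_cast hjk
    linarith
  · have : (k : ℝ) ≤ n := by exact_mod_cast hkn
    linarith

lemma wPath_inter_nonempty_of_le {i' j' : ℕ} (hij : i ≤ j) (hj'n : j' ≤ n) (hjj' : j ≤ j') :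
    (wPath n i j ∩ wPath n i' j').Nonempty := by
  rcases lt_or_ge i' j with hi'j | hji'
  · exact ⟨_, mk_mem_wPath_secondLeg hjj' (by omega),
      mk_mem_wPath_firstLeg hi'j.le hjj'⟩
  · refine ⟨_, mk_mem_wPath_lastLeg hjj' hj'n, ?_⟩
    simpa only [Nat.cast_add] using
      mk_mem_wPath_secondLeg (n := n) (i := i') (k := i + n) (by omega) (by omega)

end wPath

theorem wPaths_intersect_general (n : ℕ) (i j i' j' : ℕ)
    (hij : i < j) (hjn : j ≤ n)
    (hij' : i' < j') (hj'n : j' ≤ n) :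
    (wPath n i j ∩ wPath n i' j').Nonempty := by
  rcases le_total j j' with hjj' | hj'j
  · exact wPath_inter_nonempty_of_le hij.le hj'n hjj'
  · rw [inter_comm]
    exact wPath_inter_nonempty_of_le hij'.le hjn hj'j

/-- The `w`-paths for distinct edges mutually intersect: if
`1 ≤ i < j ≤ n` and `1 ≤ i' < j' ≤ n` with `(i,j) ≠ (i',j')`, then `P(w_{ij})` and
`P(w_{i'j'})` intersect. -/
theorem wPaths_intersect (n : ℕ) (hn : 1 ≤ n) (i j i' j' : ℕ)
    (hi1 : 1 ≤ i) (hij : i < j) (hjn : j ≤ n)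
    (hi'1 : 1 ≤ i') (hij' : i' < j') (hj'n : j' ≤ n)
    (hne : (i, j) ≠ (i', j')) :
    (wPath n i j ∩ wPath n i' j').Nonempty :=
  wPaths_intersect_general n i j i' j' hij hjn hij' hj'n
end

section
/- For every k there exists a cocomparability graph that is not a B_k-VPG-graph; in particular, no B_k-VPG class contains all cocomparability graphs. -/
/-- The point set of the rectilinear path through `p 0, p 1, …, p (k+1)`:
the union of the `k+1` consecutive closed segments (a path with at most `k` bends). -/
def BendPathSet (k : ℕ) (p : ℕ → ℝ × ℝ) : Set (ℝ × ℝ) :=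
  ⋃ i ∈ Finset.range (k + 1), segment ℝ (p i) (p (i + 1))

/-- The polyline through `p 0, …, p (k+1)` is rectilinear: every consecutive pair of
points lies on a common vertical or horizontal line. -/
def IsRectilinear (k : ℕ) (p : ℕ → ℝ × ℝ) : Prop :=
  ∀ i < k + 1, (p i).1 = (p (i + 1)).1 ∨ (p i).2 = (p (i + 1)).2

/-- `G` is a `B_k`-VPG-graph: vertices can be represented by axis-aligned rectilinear
paths with at most `k` bends each so that two distinct vertices are adjacent iff the
corresponding paths intersect. -/
def IsBkVPG {V : Type*} (k : ℕ) (G : SimpleGraph V) : Prop :=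
  ∃ p : V → ℕ → ℝ × ℝ, (∀ v, IsRectilinear k (p v)) ∧
    ∀ u v : V, u ≠ v →
      (G.Adj u v ↔ (BendPathSet k (p u) ∩ BendPathSet k (p v)).Nonempty)

/-- The cocomparability graph of a partial order: two distinct elements are adjacent
iff they are incomparable. -/
def cocompGraph {α : Type*} (P : PartialOrder α) : SimpleGraph α :=
  SimpleGraph.fromRel (fun a b => ¬ P.le a b ∧ ¬ P.le b a)

/-- The partial order `P` has dimension at most `t`: its order relation is the
intersection of `t` linear orders on the ground set. -/
def HasDimAtMost {α : Type*} (P : PartialOrder α) (t : ℕ) : Prop :=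
  ∃ r : Fin t → α → α → Prop, (∀ i, IsLinearOrder α (r i)) ∧
    ∀ a b : α, P.le a b ↔ ∀ i, r i a b

/-!
A `B_k`-VPG representation of a graph on `n` vertices uses `2n(k+2)` coordinates, and whether two
axis-parallel segments meet depends only on the relative order of their coordinates. Replacing
each coordinate by its rank therefore gives a representation on the grid `[0, 2n(k+2))²`, so
there are at most `(2n(k+2))^(2n(k+2)) = 2^O(n log n)` such graphs on `n` vertices. On the other
hand every relation `E ⊆ [m] × [m]` defines a height-two order on `[m] ⊔ [m]` whose
cocomparability graph recovers `E`, so there are at least `2^(m²)` cocomparability graphs on `2m`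
vertices, which is more for large `m`.
-/

open Set

theorem Finset.exists_strictMonoOn_lt_card {α : Type*} [LinearOrder α] (s : Finset α) :
    ∃ f : α → ℕ, StrictMonoOn f s ∧ ∀ x ∈ s, f x < s.card := by
  classical
  refine ⟨fun x => (s.filter (· < x)).card, fun x hx y hy hxy => ?_, fun x hx => ?_⟩
  · refine Finset.card_lt_card <| (Finset.ssubset_iff_of_subset fun z hz => ?_).2 ⟨x, ?_, ?_⟩
    · simp only [Finset.mem_filter] at hz ⊢
      exact ⟨hz.1, hz.2.trans hxy⟩
    · simpa [Finset.mem_filter] using ⟨hx, hxy⟩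
    · simp
  · exact Finset.card_lt_card (Finset.filter_ssubset.2 ⟨x, hx, lt_irrefl x⟩)

theorem Set.uIcc_inter_uIcc_nonempty_iff {α : Type*} [LinearOrder α] {a b c d : α} :
    (uIcc a b ∩ uIcc c d).Nonempty ↔ min a b ≤ max c d ∧ min c d ≤ max a b := by
  simp only [uIcc, Icc_inter_Icc, nonempty_Icc, sup_le_iff, le_inf_iff, inf_le_sup, true_and,
    and_true]
  exact and_comm

theorem StrictMonoOn.uIcc_inter_uIcc_nonempty_iff {α β : Type*} [LinearOrder α] [LinearOrder β]
    {f : α → β} {s : Set α} (hf : StrictMonoOn f s) {a b c d : α}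
    (ha : a ∈ s) (hb : b ∈ s) (hc : c ∈ s) (hd : d ∈ s) :
    (uIcc (f a) (f b) ∩ uIcc (f c) (f d)).Nonempty ↔ (uIcc a b ∩ uIcc c d).Nonempty := by
  simp only [Set.uIcc_inter_uIcc_nonempty_iff, min_le_iff, le_max_iff, hf.le_iff_le, *]

theorem segment_eq_uIcc_prod_uIcc {a b : ℝ × ℝ} (h : a.1 = b.1 ∨ a.2 = b.2) :
    segment ℝ a b = uIcc a.1 b.1 ×ˢ uIcc a.2 b.2 := by
  obtain ⟨a₁, a₂⟩ := a
  obtain ⟨b₁, b₂⟩ := b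
  rcases h with rfl | rfl
  · rw [← Prod.image_mk_segment_right, segment_eq_uIcc, uIcc_self, singleton_prod]
  · rw [← Prod.image_mk_segment_left, segment_eq_uIcc, uIcc_self, prod_singleton]

theorem segment_inter_segment_nonempty_iff {a b c d : ℝ × ℝ} (hab : a.1 = b.1 ∨ a.2 = b.2)
    (hcd : c.1 = d.1 ∨ c.2 = d.2) :
    (segment ℝ a b ∩ segment ℝ c d).Nonempty ↔
      (uIcc a.1 b.1 ∩ uIcc c.1 d.1).Nonempty ∧ (uIcc a.2 b.2 ∩ uIcc c.2 d.2).Nonempty := by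
  rw [segment_eq_uIcc_prod_uIcc hab, segment_eq_uIcc_prod_uIcc hcd, prod_inter_prod,
    prod_nonempty_iff]

theorem bendPathSet_inter_bendPathSet_nonempty_iff {k : ℕ} {p q : ℕ → ℝ × ℝ} :
    (BendPathSet k p ∩ BendPathSet k q).Nonempty ↔ ∃ i < k + 1, ∃ j < k + 1,
      (segment ℝ (p i) (p (i + 1)) ∩ segment ℝ (q j) (q (j + 1))).Nonempty := by
  simp only [BendPathSet, Finset.mem_range, iUnion_inter, inter_iUnion, nonempty_iUnion,
    exists_prop]
  constructor <;> rintro ⟨a, ha, b, hb, h⟩ <;> exact ⟨b, hb, a, ha, h⟩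

theorem bendPathSet_congr {k : ℕ} {p q : ℕ → ℝ × ℝ} (h : ∀ i < k + 2, p i = q i) :
    BendPathSet k p = BendPathSet k q := by
  refine iUnion₂_congr fun i hi => ?_
  rw [Finset.mem_range] at hi
  rw [h i (by omega), h (i + 1) (by omega)]

theorem IsRectilinear.map {k : ℕ} {p : ℕ → ℝ × ℝ} (hp : IsRectilinear k p) (f g : ℝ → ℝ) :
    IsRectilinear k (Prod.map f g ∘ p) := fun i hi => by
  rcases hp i hi with h | h
  · exact Or.inl (congrArg f h)
  · exact Or.inr (congrArg g h)

theorem bendPathSet_map_inter_nonempty_iff {k : ℕ} {p q : ℕ → ℝ × ℝ} {f : ℝ → ℝ} {s : Set ℝ}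
    (hf : StrictMonoOn f s) (hp : IsRectilinear k p) (hq : IsRectilinear k q)
    (hps : ∀ i < k + 2, (p i).1 ∈ s ∧ (p i).2 ∈ s)
    (hqs : ∀ i < k + 2, (q i).1 ∈ s ∧ (q i).2 ∈ s) :
    (BendPathSet k (Prod.map f f ∘ p) ∩ BendPathSet k (Prod.map f f ∘ q)).Nonempty ↔
      (BendPathSet k p ∩ BendPathSet k q).Nonempty := by
  simp only [bendPathSet_inter_bendPathSet_nonempty_iff]
  refine exists_congr fun i => and_congr_right fun hi => exists_congr fun j =>
    and_congr_right fun hj => ?_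
  rw [segment_inter_segment_nonempty_iff (hp.map f f i hi) (hq.map f f j hj),
    segment_inter_segment_nonempty_iff (hp i hi) (hq j hj)]
  simp only [Function.comp_apply, Prod.map_fst, Prod.map_snd]
  obtain ⟨hpi₁, hpi₂⟩ := hps i (by omega)
  obtain ⟨hpi₁', hpi₂'⟩ := hps (i + 1) (by omega)
  obtain ⟨hqj₁, hqj₂⟩ := hqs j (by omega)
  obtain ⟨hqj₁', hqj₂'⟩ := hqs (j + 1) (by omega)
  rw [hf.uIcc_inter_uIcc_nonempty_iff hpi₁ hpi₁' hqj₁ hqj₁',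
    hf.uIcc_inter_uIcc_nonempty_iff hpi₂ hpi₂' hqj₂ hqj₂']

def bendPathGraph {V : Type*} (k : ℕ) (p : V → ℕ → ℝ × ℝ) : SimpleGraph V :=
  SimpleGraph.fromRel fun u v => (BendPathSet k (p u) ∩ BendPathSet k (p v)).Nonempty

theorem IsBkVPG.exists_eq_bendPathGraph {V : Type*} {k : ℕ} {G : SimpleGraph V}
    (h : IsBkVPG k G) :
    ∃ p : V → ℕ → ℝ × ℝ, (∀ v, IsRectilinear k (p v)) ∧ bendPathGraph k p = G := by
  obtain ⟨p, hp, hadj⟩ := h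
  refine ⟨p, hp, SimpleGraph.ext <| funext₂ fun u v => propext ?_⟩
  rw [bendPathGraph, SimpleGraph.fromRel_adj, inter_comm (BendPathSet k (p v)), or_self]
  exact ⟨fun ⟨huv, h⟩ => (hadj u v huv).2 h,
    fun h => ⟨G.ne_of_adj h, (hadj u v (G.ne_of_adj h)).1 h⟩⟩

theorem bendPathGraph_congr {V : Type*} {k : ℕ} {p q : V → ℕ → ℝ × ℝ}
    (h : ∀ v, ∀ i < k + 2, p v i = q v i) : bendPathGraph k p = bendPathGraph k q := by
  simp only [bendPathGraph, bendPathSet_congr (h _)]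

theorem bendPathGraph_map {V : Type*} {k : ℕ} {p : V → ℕ → ℝ × ℝ} {f : ℝ → ℝ} {s : Set ℝ}
    (hf : StrictMonoOn f s) (hp : ∀ v, IsRectilinear k (p v))
    (hps : ∀ v, ∀ i < k + 2, (p v i).1 ∈ s ∧ (p v i).2 ∈ s) :
    bendPathGraph k (fun v => Prod.map f f ∘ p v) = bendPathGraph k p := by
  simp only [bendPathGraph, bendPathSet_map_inter_nonempty_iff hf (hp _) (hp _) (hps _) (hps _)]

def gridPath {k N : ℕ} (r : Fin (k + 2) → Fin N × Fin N) (j : ℕ) : ℝ × ℝ :=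
  if h : j < k + 2 then (((r ⟨j, h⟩).1 : ℕ), ((r ⟨j, h⟩).2 : ℕ)) else 0

theorem IsBkVPG.exists_eq_bendPathGraph_gridPath {V : Type*} [Fintype V] {k N : ℕ}
    (hN : 2 * (Fintype.card V * (k + 2)) ≤ N) {G : SimpleGraph V} (h : IsBkVPG k G) :
    ∃ r : V → Fin (k + 2) → Fin N × Fin N, bendPathGraph k (fun v => gridPath (r v)) = G := by
  classical
  obtain ⟨p, hp, rfl⟩ := h.exists_eq_bendPathGraph
  let vertex (x : V × Fin (k + 2)) : ℝ × ℝ := p x.1 x.2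
  let coords : Finset ℝ :=
    Finset.univ.image (Prod.fst ∘ vertex) ∪ Finset.univ.image (Prod.snd ∘ vertex)
  have hcard : coords.card ≤ N := by
    refine (Finset.card_union_le _ _).trans (le_trans ?_ hN)
    rw [two_mul]
    exact add_le_add (Finset.card_image_le.trans (by simp)) (Finset.card_image_le.trans (by simp))
  have hmem : ∀ v, ∀ i < k + 2, (p v i).1 ∈ coords ∧ (p v i).2 ∈ coords := fun v i hi => by
    have hx : ((v, ⟨i, hi⟩) : V × Fin (k + 2)) ∈ Finset.univ := Finset.mem_univ _
    exact ⟨Finset.mem_union_left _ (Finset.mem_image_of_mem _ hx),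
      Finset.mem_union_right _ (Finset.mem_image_of_mem _ hx)⟩
  obtain ⟨f, hf, hlt⟩ := coords.exists_strictMonoOn_lt_card
  refine ⟨fun v i => (⟨f (p v i).1, (hlt _ (hmem v i i.2).1).trans_le hcard⟩,
    ⟨f (p v i).2, (hlt _ (hmem v i i.2).2).trans_le hcard⟩), ?_⟩
  calc _ = bendPathGraph k (fun v => Prod.map (Nat.cast ∘ f) (Nat.cast ∘ f) ∘ p v) :=
        bendPathGraph_congr fun v i hi => by simp [gridPath, hi, Prod.map]
    _ = bendPathGraph k p := bendPathGraph_map (Nat.strictMono_cast.comp_strictMonoOn hf) hp hmem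

theorem ncard_setOf_isBkVPG_le (V : Type*) [Fintype V] (k : ℕ) :
    {G : SimpleGraph V | IsBkVPG k G}.ncard ≤
      (2 * (Fintype.card V * (k + 2))) ^ (2 * (Fintype.card V * (k + 2))) := by
  classical
  set N := 2 * (Fintype.card V * (k + 2))
  calc _ ≤ (range fun r : V → Fin (k + 2) → Fin N × Fin N =>
          bendPathGraph k fun v => gridPath (r v)).ncard :=
        ncard_le_ncard fun G hG => hG.exists_eq_bendPathGraph_gridPath le_rfl
    _ ≤ Nat.card (V → Fin (k + 2) → Fin N × Fin N) := Finite.card_range_le _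
    _ = _ := by
      rw [Nat.card_eq_fintype_card]
      simp only [Fintype.card_fun, Fintype.card_prod, Fintype.card_fin, ← sq, ← pow_mul, N]
      ring

abbrev bipartiteOrder {α β : Type*} (E : α → β → Prop) : PartialOrder (α ⊕ β) where
  le
    | .inl a, .inl a' => a = a'
    | .inr b, .inr b' => b = b'
    | .inl a, .inr b => E a b
    | .inr _, .inl _ => False
  le_refl := by rintro (a | b) <;> rfl
  le_trans := by
    rintro (a | b) (a' | b') (a'' | b'') h₁ h₂ <;> simp_all
  le_antisymm := by rintro (a | b) (a' | b') <;> simp_all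

theorem cocompGraph_bipartiteOrder_adj_inl_inr {α β : Type*} (E : α → β → Prop) (a : α)
    (b : β) :
    (cocompGraph (bipartiteOrder E)).Adj (.inl a) (.inr b) ↔ ¬ E a b := by
  have hba : ¬ (bipartiteOrder E).le (.inr b) (.inl a) := id
  rw [cocompGraph, SimpleGraph.fromRel_adj]
  exact ⟨fun ⟨_, h⟩ => h.elim And.left And.right, fun h => ⟨Sum.inl_ne_inr, .inl ⟨h, hba⟩⟩⟩

theorem cocompGraph_lift {α β : Type*} (P : PartialOrder α) (f : β → α)
    (hf : Function.Injective f) :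
    cocompGraph (@PartialOrder.lift β α P f hf) = (cocompGraph P).comap f := by
  ext u v
  simp only [cocompGraph, SimpleGraph.fromRel_adj, SimpleGraph.comap_adj, hf.ne_iff]
  rfl

theorem two_pow_le_ncard_setOf_cocompGraph {V α β : Type*} [Finite α] [Finite β]
    (e : V ≃ α ⊕ β) :
    2 ^ (Nat.card α * Nat.card β) ≤ {G : SimpleGraph V | ∃ P, cocompGraph P = G}.ncard := by
  have : Finite V := .of_equiv _ e.symm
  let F (E : α → β → Prop) : SimpleGraph V :=
    cocompGraph (@PartialOrder.lift V _ (bipartiteOrder E) e e.injective)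
  have hF : Function.Injective F := fun E₁ E₂ h => funext₂ fun a b =>
    propext <| not_iff_not.1 <| by
    have hadj := congrArg (fun G => G.Adj (e.symm (.inl a)) (e.symm (.inr b))) h
    simpa [F, cocompGraph_lift, cocompGraph_bipartiteOrder_adj_inl_inr] using hadj
  calc 2 ^ (Nat.card α * Nat.card β) = Nat.card (α → β → Prop) := by
        simp [Nat.card_fun, ← pow_mul, mul_comm]
    _ = (range F).ncard := (ncard_range_of_injective hF).symm
    _ ≤ _ := ncard_le_ncard <| by
        rintro _ ⟨E, rfl⟩
        exact ⟨_, rfl⟩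

/-- With `m = 2 ^ s` the left side is at most `2 ^ (4 m K (s + 2 + K))`, and
`4 K (s + 2 + K) < 2 ^ s` once `s = 9 K + 3`. -/
theorem exists_pow_self_lt_two_pow_sq (K : ℕ) :
    ∃ m : ℕ, (4 * m * K) ^ (4 * m * K) < 2 ^ (m * m) := by
  obtain ⟨s, hs⟩ : ∃ s, s = 9 * K + 3 := ⟨_, rfl⟩
  refine ⟨2 ^ s, ?_⟩
  have hbase : 4 * 2 ^ s * K ≤ 2 ^ (s + 2 + K) := calc
    4 * 2 ^ s * K = 2 ^ (s + 2) * K := by ring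
    _ ≤ 2 ^ (s + 2) * 2 ^ K := Nat.mul_le_mul_left _ Nat.lt_two_pow_self.le
    _ = 2 ^ (s + 2 + K) := (pow_add ..).symm
  have hexp : (s + 2 + K) * (4 * K) < 2 ^ s := by
    have h₁ : 4 * K < 2 ^ (4 * K) := Nat.lt_two_pow_self
    have h₂ : s + 2 + K < 2 ^ (5 * K + 3) := by
      have : 5 * K + 2 < 2 ^ (5 * K + 2) := Nat.lt_two_pow_self
      rw [pow_succ]
      omega
    calc _ < 2 ^ (5 * K + 3) * 2 ^ (4 * K) := Nat.mul_lt_mul'' h₂ h₁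
      _ = 2 ^ s := by rw [← pow_add, hs]; ring_nf
  calc (4 * 2 ^ s * K) ^ (4 * 2 ^ s * K) ≤ (2 ^ (s + 2 + K)) ^ (4 * 2 ^ s * K) :=
        Nat.pow_le_pow_left hbase _
    _ = 2 ^ ((s + 2 + K) * (4 * K) * 2 ^ s) := by rw [← pow_mul]; ring_nf
    _ < 2 ^ (2 ^ s * 2 ^ s) :=
        Nat.pow_lt_pow_right (by norm_num) (Nat.mul_lt_mul_of_pos_right hexp (by positivity))

/-- For every `k` there exists a cocomparability graph that is not
a `B_k`-VPG-graph; in particular, no class `B_k`-VPG contains all cocomparability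
graphs. -/
theorem exists_cocomparability_not_BkVPG (k : ℕ) :
    ∃ (n : ℕ) (P : PartialOrder (Fin n)), ¬ IsBkVPG k (cocompGraph P) := by
  by_contra! h
  obtain ⟨m, hm⟩ := exists_pow_self_lt_two_pow_sq (k + 2)
  have hsub : {G : SimpleGraph (Fin (m + m)) | ∃ P, cocompGraph P = G} ⊆ {G | IsBkVPG k G} := by
    rintro _ ⟨P, rfl⟩
    exact h _ P
  have := (two_pow_le_ncard_setOf_cocompGraph finSumFinEquiv.symm).trans
    ((ncard_le_ncard hsub).trans (ncard_setOf_isBkVPG_le (Fin (m + m)) k))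
  simp only [Nat.card_fin, Fintype.card_fin] at this
  rw [show 2 * ((m + m) * (k + 2)) = 4 * m * (k + 2) by ring] at this
  omega
end
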